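/- Objective bound for IP-feasible points. Suppose (w, y, z) with w, y ∈ {0,1}^n and z ∈ {0,1}^{n×n} satisfies, for all i, j ∈ [n]: z_ij ≤ w_i, y_j ≥ z_ij, y_j ≤ Σ_{i=1}^n z_ij, and ‖x_i − x_j‖·z_ij ≤ r_i. Then Σ_{j=1}^n y_j ≤ Cov(w). -/
import Mathlib


open Finset
open scoped Classical

/-- Coverage of the aggregate explainer selected by `w`. -/
noncomputable def Cov {n m : ℕ} (x : Fin n → EuclideanSpace ℝ (Fin m))
    (r : Fin n → ℝ) (w : Fin n → ℝ) : ℕ :=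
  Set.ncard {j : Fin n | ∃ i : Fin n, w i = 1 ∧ ‖x j - x i‖ ≤ r i}

/-- Objective bound: any binary IP-feasible `(w, y, z)` has objective value at most `Cov w`. -/
theorem IP_feasible_objective_bound {n m : ℕ}
    (x : Fin n → EuclideanSpace ℝ (Fin m)) (r : Fin n → ℝ)
    (hr : ∀ i, 0 ≤ r i)
    (w y : Fin n → ℝ) (z : Fin n → Fin n → ℝ)
    (hw : ∀ i, w i = 0 ∨ w i = 1)
    (hy : ∀ j, y j = 0 ∨ y j = 1)
    (hz : ∀ i j, z i j = 0 ∨ z i j = 1)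
    (h1 : ∀ i j, z i j ≤ w i)
    (h2 : ∀ i j, z i j ≤ y j)
    (h3 : ∀ j, y j ≤ ∑ i, z i j)
    (h4 : ∀ i j, ‖x i - x j‖ * z i j ≤ r i) :
    ∑ j, y j ≤ (Cov x r w : ℝ) := by
  classical
  set S : Finset (Fin n) := Finset.univ.filter (fun j => y j = 1) with hS
  have hsum : ∑ j, y j = (S.card : ℝ) := by
    rw [hS, Finset.card_filter]
    push_cast
    apply Finset.sum_congr rfl
    intro j _
    rcases hy j with h | h <;> simp [h]
  have hsub : (↑S : Set (Fin n)) ⊆ {j : Fin n | ∃ i : Fin n, w i = 1 ∧ ‖x j - x i‖ ≤ r i} := by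
    intro j hj
    simp only [hS, Finset.coe_filter, Set.mem_setOf_eq, Finset.mem_univ, true_and] at hj
    -- there exists i with z i j = 1
    have hpos : (0 : ℝ) < ∑ i, z i j := by
      have := h3 j; rw [hj] at this; linarith
    obtain ⟨i, _, hzi⟩ : ∃ i ∈ Finset.univ, 0 < z i j := by
      by_contra hcon
      push_neg at hcon
      have : ∑ i, z i j ≤ 0 := Finset.sum_nonpos (fun i hi => hcon i hi)
      linarith
    have hz1 : z i j = 1 := by rcases hz i j with h | h <;> simp [h] at hzi ⊢
    have hw1 : w i = 1 := by
      have := h1 i j; rw [hz1] at this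
      rcases hw i with h | h
      · rw [h] at this; linarith
      · exact h
    refine ⟨i, hw1, ?_⟩
    have := h4 i j
    rw [hz1, mul_one] at this
    rwa [norm_sub_rev] at this
  have hfin : {j : Fin n | ∃ i : Fin n, w i = 1 ∧ ‖x j - x i‖ ≤ r i}.Finite :=
    Set.toFinite _
  have hcard : S.card ≤ Cov x r w := by
    rw [Cov, ← Set.ncard_coe_finset S]
    exact Set.ncard_le_ncard hsub hfin
  rw [hsum]
  exact_mod_cast hcard
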